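/- (Feedback lemma.) Let F : [1, ∞) → [0, ∞) be nondecreasing with F(R) ≤ C₁ R^d for all R ≥ 1 (some C₁, d > 0), and suppose there exist constants C > 0, ã > 0 and b̃ ∈ [0, 1) such that F(R) ≤ C R^{−ã} F(4R)^{b̃} for all R ≥ 1. Then F ≡ 0. -/

import Mathlib

/-!
A bound `F S ≤ K * S ^ e` on `[1, ∞)`, inserted into the feedback inequality at `c * S`, gives a
bound of the same shape with exponent `b * e - a`. While the exponent is nonnegative, `b ≤ 1` makes
it drop by at least `a` at each step, so iterating from the growth exponent `d` eventually produces a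
negative exponent. Then monotonicity gives `F R ≤ F S ≤ K * S ^ e → 0` as `S → ∞`.
-/

open Filter

def HasPowerBound (F : ℝ → ℝ) (e : ℝ) : Prop :=
  ∃ K, 0 ≤ K ∧ ∀ S, 1 ≤ S → F S ≤ K * S ^ e

namespace HasPowerBound

variable {F : ℝ → ℝ} {C a b c : ℝ}

theorem feedback (hF : ∀ R, 1 ≤ R → 0 ≤ F R) (hC : 0 ≤ C) (hb : 0 ≤ b) (hc : 1 ≤ c)
    (hfb : ∀ R, 1 ≤ R → F R ≤ C * R ^ (-a) * F (c * R) ^ b) {e : ℝ} (h : HasPowerBound F e) :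
    HasPowerBound F (b * e - a) := by
  obtain ⟨K, hK, hKb⟩ := h
  have hc0 : 0 ≤ c := zero_le_one.trans hc
  refine ⟨C * (K * c ^ e) ^ b, by positivity, fun S hS => ?_⟩
  have hS0 : 0 < S := zero_lt_one.trans_le hS
  have hcS : 1 ≤ c * S := one_le_mul_of_one_le_of_one_le hc hS
  calc F S ≤ C * S ^ (-a) * F (c * S) ^ b := hfb S hS
    _ ≤ C * S ^ (-a) * (K * (c * S) ^ e) ^ b := by
      gcongr
      exacts [hF _ hcS, hKb _ hcS]
    _ = C * (K * c ^ e) ^ b * S ^ (b * e - a) := by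
      rw [Real.mul_rpow hc0 hS0.le, ← mul_assoc, Real.mul_rpow (by positivity) (by positivity),
        ← Real.rpow_mul hS0.le, Real.rpow_sub hS0, Real.rpow_neg hS0.le, mul_comm e b]
      ring

theorem iterate (hF : ∀ R, 1 ≤ R → 0 ≤ F R) (hC : 0 ≤ C) (hb : 0 ≤ b) (hc : 1 ≤ c)
    (hfb : ∀ R, 1 ≤ R → F R ≤ C * R ^ (-a) * F (c * R) ^ b) {e : ℝ} (h : HasPowerBound F e)
    (n : ℕ) : HasPowerBound F ((fun x => b * x - a)^[n] e) := by
  induction n with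
  | zero => exact h
  | succ n ih =>
    rw [Function.iterate_succ_apply']
    exact ih.feedback hF hC hb hc hfb

theorem eq_zero_of_neg (hF : ∀ R, 1 ≤ R → 0 ≤ F R)
    (hmono : ∀ R S, 1 ≤ R → R ≤ S → F R ≤ F S) {e : ℝ} (h : HasPowerBound F e) (he : e < 0) :
    ∀ R, 1 ≤ R → F R = 0 := by
  obtain ⟨K, -, hKb⟩ := h
  intro R hR
  have hlim : Tendsto (fun S : ℝ => K * S ^ e) atTop (nhds 0) := by
    simpa using (tendsto_rpow_neg_atTop (neg_pos.mpr he)).const_mul K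
  refine le_antisymm (ge_of_tendsto hlim ?_) (hF R hR)
  filter_upwards [eventually_ge_atTop R] with S hRS
  exact (hmono R S hR hRS).trans (hKb S (hR.trans hRS))

end HasPowerBound

theorem exists_iterate_mul_sub_neg {a b : ℝ} (ha : 0 < a) (hb : b ≤ 1) (x : ℝ) :
    ∃ n : ℕ, (fun y => b * y - a)^[n] x < 0 := by
  by_contra! hnonneg
  have hdrop : ∀ n : ℕ, (fun y => b * y - a)^[n] x ≤ x - n * a := by
    intro n
    induction n with
    | zero => simp
    | succ n ih =>
      rw [Function.iterate_succ_apply']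
      push_cast
      nlinarith [hnonneg n]
  obtain ⟨n, hn⟩ := exists_nat_gt (x / a)
  have hxn : x < n * a := (div_lt_iff₀ ha).mp hn
  linarith [hnonneg n, hdrop n]

theorem feedback_lemma_general
    (F : ℝ → ℝ) (hFnonneg : ∀ R : ℝ, 1 ≤ R → 0 ≤ F R)
    (hFmono : ∀ R S : ℝ, 1 ≤ R → R ≤ S → F R ≤ F S)
    (C₁ d : ℝ) (hC₁ : 0 < C₁)
    (hgrowth : ∀ R : ℝ, 1 ≤ R → F R ≤ C₁ * R ^ d)
    (C atil btil : ℝ) (hC : 0 < C) (hatil : 0 < atil) (hbtil0 : 0 ≤ btil) (hbtil1 : btil < 1)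
    (hfeedback : ∀ R : ℝ, 1 ≤ R → F R ≤ C * R ^ (-atil) * F (4 * R) ^ btil) :
    ∀ R : ℝ, 1 ≤ R → F R = 0 := by
  have hbound₀ : HasPowerBound F d := ⟨C₁, hC₁.le, hgrowth⟩
  obtain ⟨n, hn⟩ := exists_iterate_mul_sub_neg hatil hbtil1.le d
  exact (hbound₀.iterate hFnonneg hC.le hbtil0 (by norm_num) hfeedback n).eq_zero_of_neg
    hFnonneg hFmono hn

/-- Feedback lemma: if `F : [1,∞) → [0,∞)` is nondecreasing with polynomial growth
`F(R) ≤ C₁ R^d`, and satisfies the sublinear feedback inequality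
`F(R) ≤ C R^{-ã} F(4R)^{b̃}` for all `R ≥ 1`, with `ã > 0` and `0 ≤ b̃ < 1`,
then `F ≡ 0` on `[1,∞)`. -/
theorem feedback_lemma
    (F : ℝ → ℝ) (hFnonneg : ∀ R : ℝ, 1 ≤ R → 0 ≤ F R)
    (hFmono : ∀ R S : ℝ, 1 ≤ R → R ≤ S → F R ≤ F S)
    (C₁ d : ℝ) (hC₁ : 0 < C₁) (hd : 0 < d)
    (hgrowth : ∀ R : ℝ, 1 ≤ R → F R ≤ C₁ * R ^ d)
    (C atil btil : ℝ) (hC : 0 < C) (hatil : 0 < atil) (hbtil0 : 0 ≤ btil) (hbtil1 : btil < 1)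
    (hfeedback : ∀ R : ℝ, 1 ≤ R → F R ≤ C * R ^ (-atil) * F (4 * R) ^ btil) :
    ∀ R : ℝ, 1 ≤ R → F R = 0 :=
  feedback_lemma_general F hFnonneg hFmono C₁ d hC₁ hgrowth C atil btil hC hatil hbtil0 hbtil1
    hfeedback
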